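/- Let (Γ, ψ) be a GBS graph and let (Γ, ψ′) be obtained from (Γ, ψ) by an induction move. Then there is a finite sequence of GBS graphs starting at (Γ, ψ) and ending at a GBS graph isomorphic to (Γ, ψ′) as a labelled graph, in which each graph is obtained from the previous one by an elementary expansion, an elementary contraction, or a slide move, and in which every GBS graph occurring in the sequence has at most |V(Γ)| + 1 vertices. -/

import Mathlib

/-- The abelian group `A := ℤ/2ℤ ⊕ ⊕_{i≥1} ℤ`. -/
abbrev A : Type := ZMod 2 × (ℕ →₀ ℤ)

/-- `a ∈ A⁺`. -/
def Apos (a : A) : Prop := ∀ i : ℕ, 0 ≤ a.2 i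

/-- The support of an element of `A` (ignoring the `ℤ/2ℤ` component). -/
def suppA (a : A) : Finset ℕ := a.2.support

/-- `vec z ∈ A⁺` for `z ∈ ℤ∖{0}`: the `ℤ/2ℤ` component records the sign of `z`,
and the `i`-th coordinate (`i : ℕ`, corresponding to the `(i+1)`-st prime) is the
exponent of the `(i+1)`-st prime `Nat.nth Nat.Prime i` in the factorization of `|z|`. -/
noncomputable def vec (z : ℤ) : A :=
  (if 0 < z then 0 else 1,
    Finsupp.comapDomain (Nat.nth Nat.Prime)
      (z.natAbs.factorization.mapRange (fun n : ℕ => (n : ℤ)) (by simp))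
      ((Nat.nth_injective Nat.infinite_setOf_prime).injOn))

/-- A GBS graph: a finite graph in the sense of Serre (vertex set `V`, edge set
`E`, fixed-point-free involution `bar`, initial-vertex map `ini`), together with
a labelling of the edges by nonzero integers. -/
structure GBSGraph (V E : Type) : Type where
  bar : E → E
  bar_ne : ∀ e, bar e ≠ e
  bar_invol : ∀ e, bar (bar e) = e
  ini : E → V
  label : E → ℤ
  label_ne : ∀ e, label e ≠ 0

namespace GBSGraph

variable {V E : Type}

/-- Terminal vertex of an edge. -/
def ter (G : GBSGraph V E) (e : E) : V := G.ini (G.bar e)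

/-- Initial endpoint of an edge in the affine representation: `(ι(e), vec(ψ(ē)))`. -/
noncomputable def affI (G : GBSGraph V E) (e : E) : V × A :=
  (G.ini e, vec (G.label (G.bar e)))

/-- Terminal endpoint of an edge in the affine representation: `(τ(e), vec(ψ(e)))`. -/
noncomputable def affT (G : GBSGraph V E) (e : E) : V × A :=
  (G.ter e, vec (G.label e))

/-- One step of an affine path: there is an edge `e` and a translation `w ∈ A⁺`
with `ιΛ(e) + w = p` and `τΛ(e) + w = q`. -/
def AffStep (G : GBSGraph V E) (p q : V × A) : Prop :=
  ∃ (e : E) (w : A), Apos w ∧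
    ((G.affI e).1, (G.affI e).2 + w) = p ∧ ((G.affT e).1, (G.affT e).2 + w) = q

/-- Conjugacy of points of the affine representation: reachability by affine paths. -/
def Conj (G : GBSGraph V E) : V × A → V × A → Prop :=
  Relation.ReflTransGen (AffStep G)

/-- A vertex `v` is redundant if `(v, 0)` is conjugate to a point `(u, b)` with
`u ≠ v`. -/
def Redundant (G : GBSGraph V E) (v : V) : Prop :=
  ∃ (u : V) (b : A), u ≠ v ∧ Apos b ∧ G.Conj (v, 0) (u, b)

/-- A set of collapsing data for a vertex `v`: pairwise distinct edges
`es 0, …, es (n−1), e` such that each `es j` goes from `(v, a_j)` to `(v, b_j)`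
with `supp(a_j) ⊆ supp(b_0) ∪ … ∪ supp(b_{j−1})`, and `e` goes from `(v, c)` to
`(u, d)` with `u ≠ v` and `supp(c) ⊆ supp(b_0) ∪ … ∪ supp(b_{n−1})`. -/
def CollapsingData (G : GBSGraph V E) (v : V) (n : ℕ) (es : Fin n → E) (e : E) : Prop :=
  Function.Injective es ∧ (∀ i, es i ≠ e) ∧
  (∀ i, G.ini (es i) = v ∧ G.ter (es i) = v) ∧
  (∀ j : Fin n, suppA (vec (G.label (G.bar (es j)))) ⊆
    (Finset.univ.filter fun i : Fin n => i < j).biUnion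
      fun i => suppA (vec (G.label (es i)))) ∧
  G.ini e = v ∧ G.ter e ≠ v ∧
  suppA (vec (G.label (G.bar e))) ⊆
    Finset.univ.biUnion fun i : Fin n => suppA (vec (G.label (es i)))

end GBSGraph

namespace GBSGraph

variable {V E V' E' : Type}

/-- A GBS graph is totally reduced if (1) `(v,0) ∼ (u,b)` implies `u = v`, and
(2) every vertex `v` carries an edge with endpoints `(v, 0)` and `(v, w)` in the
affine representation such that `supp b ⊆ supp w` whenever `(v,0) ∼ (v,b)`. -/
def TotallyReduced (G : GBSGraph V E) : Prop :=
  (∀ (v u : V) (b : A), Apos b → G.Conj (v, 0) (u, b) → u = v) ∧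
  (∀ v : V, ∃ (e : E) (w : A), Apos w ∧
    ((G.affI e = (v, 0) ∧ G.affT e = (v, w)) ∨
      (G.affI e = (v, w) ∧ G.affT e = (v, 0))) ∧
    ∀ b : A, Apos b → G.Conj (v, 0) (v, b) → suppA b ⊆ suppA w)

/-- Vertex sign-change at a vertex `v`. -/
def VSignMove (G G' : GBSGraph V E) : Prop :=
  ∃ v : V, G'.bar = G.bar ∧ G'.ini = G.ini ∧
    (∀ e, G.ter e = v → G'.label e = -G.label e) ∧
    (∀ e, G.ter e ≠ v → G'.label e = G.label e)

/-- Edge sign-change at an edge `d`. -/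
def ESignMove (G G' : GBSGraph V E) : Prop :=
  ∃ d : E, G'.bar = G.bar ∧ G'.ini = G.ini ∧
    G'.label d = -G.label d ∧ G'.label (G.bar d) = -G.label (G.bar d) ∧
    (∀ e, e ≠ d → e ≠ G.bar d → G'.label e = G.label e)

/-- Slide move: slide the edge `d` (with `τ(d) = ι(e)`, `ψ(d) = ℓ·ψ(ē)`) across
the edge `e`; the new edge `d'` (identified with `d`) has `ι(d') = ι(d)`,
`τ(d') = τ(e)`, `ψ(d̄') = ψ(d̄)`, `ψ(d') = ℓ·ψ(e)`. -/
def SlideMove (G G' : GBSGraph V E) : Prop :=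
  ∃ (d e : E) (ℓ : ℤ),
    d ≠ e ∧ d ≠ G.bar e ∧ G.ter d = G.ini e ∧ ℓ ≠ 0 ∧
    G.label d = ℓ * G.label (G.bar e) ∧
    G'.bar = G.bar ∧
    (∀ f, f ≠ G.bar d → G'.ini f = G.ini f) ∧
    G'.ini (G.bar d) = G.ter e ∧
    (∀ f, f ≠ d → G'.label f = G.label f) ∧
    G'.label d = ℓ * G.label e

/-- Induction move: given a loop `e` at `v` with `ψ(ē) = 1`, `ψ(e) = n`, and
`ℓ ∣ n^k`, multiply by `ℓ` the label `ψ(d)` of every edge `d ∉ {e, ē}` with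
`τ(d) = v`. -/
def InductionMove (G G' : GBSGraph V E) : Prop :=
  ∃ (e : E) (ℓ : ℤ) (k : ℕ),
    G.ini e = G.ter e ∧ G.label (G.bar e) = 1 ∧ ℓ ≠ 0 ∧ ℓ ∣ G.label e ^ k ∧
    G'.bar = G.bar ∧ G'.ini = G.ini ∧
    (∀ d, d ≠ e → d ≠ G.bar e → G.ter d = G.ter e → G'.label d = ℓ * G.label d) ∧
    (∀ d, d = e ∨ d = G.bar e ∨ G.ter d ≠ G.ter e → G'.label d = G.label d)

/-- Swap move on two loops `e₁, e₂` at a common vertex `v`. -/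
def SwapMove (G G' : GBSGraph V E) : Prop :=
  ∃ (e₁ e₂ : E) (n m ℓ₁ ℓ₂ : ℤ) (k₁ k₂ : ℕ),
    e₂ ≠ e₁ ∧ e₂ ≠ G.bar e₁ ∧
    G.ini e₁ = G.ter e₁ ∧ G.ini e₂ = G.ini e₁ ∧ G.ter e₂ = G.ini e₁ ∧
    n ≠ 0 ∧ m ≠ 0 ∧ ℓ₁ ≠ 0 ∧ ℓ₂ ≠ 0 ∧
    G.label (G.bar e₁) = n ∧ G.label e₁ = ℓ₁ * n ∧
    G.label (G.bar e₂) = m ∧ G.label e₂ = ℓ₂ * m ∧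
    n ∣ m ∧ m ∣ ℓ₁ ^ k₁ * n ∧ m ∣ ℓ₂ ^ k₂ * n ∧
    G'.bar = G.bar ∧ G'.ini = G.ini ∧
    G'.label (G.bar e₁) = m ∧ G'.label e₁ = ℓ₁ * m ∧
    G'.label (G.bar e₂) = n ∧ G'.label e₂ = ℓ₂ * n ∧
    (∀ f, f ≠ e₁ → f ≠ G.bar e₁ → f ≠ e₂ → f ≠ G.bar e₂ → G'.label f = G.label f)

/-- Connection move on an edge `d` from `u` to `v` and a loop `e` at `v`. -/
def ConnectionMove (G G' : GBSGraph V E) : Prop :=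
  ∃ (d e : E) (m n ℓ₁ ℓ₂ ℓ : ℤ) (k : ℕ),
    d ≠ e ∧ d ≠ G.bar e ∧
    G.ter d = G.ini e ∧ G.ter e = G.ini e ∧
    m ≠ 0 ∧ n ≠ 0 ∧ ℓ₁ ≠ 0 ∧ ℓ₂ ≠ 0 ∧ ℓ ≠ 0 ∧
    G.label (G.bar d) = m ∧ G.label d = ℓ₁ * n ∧
    G.label (G.bar e) = n ∧ G.label e = ℓ * n ∧
    ℓ₁ * ℓ₂ = ℓ ^ k ∧
    G'.bar = G.bar ∧
    G'.ini d = G.ini e ∧ G'.ini (G.bar d) = G.ini d ∧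
    G'.ini e = G.ini d ∧ G'.ini (G.bar e) = G.ini d ∧
    (∀ f, f ≠ d → f ≠ G.bar d → f ≠ e → f ≠ G.bar e → G'.ini f = G.ini f) ∧
    G'.label (G.bar d) = n ∧ G'.label d = ℓ₂ * m ∧
    G'.label (G.bar e) = m ∧ G'.label e = ℓ * m ∧
    (∀ f, f ≠ d → f ≠ G.bar d → f ≠ e → f ≠ G.bar e → G'.label f = G.label f)

/-- An isomorphism of labelled graphs between two GBS graphs. -/
def LabelledIso (G : GBSGraph V E) (H : GBSGraph V' E') : Prop :=
  ∃ (fV : V ≃ V') (fE : E ≃ E'),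
    (∀ e, fE (G.bar e) = H.bar (fE e)) ∧
    (∀ e, fV (G.ini e) = H.ini (fE e)) ∧
    (∀ e, G.label e = H.label (fE e))

end GBSGraph

namespace GBSGraph

variable {V E : Type}

/-- Elementary expansion: add a new vertex `v₀` (encoded `none : Option V`) and a
new edge `e₀` (encoded `Sum.inr true`, with reverse `Sum.inr false`) from `v₀` to
the existing vertex `v`, with `ψ(ē₀) = 1` and `ψ(e₀) = k`. -/
def expand (G : GBSGraph V E) (v : V) (k : ℤ) (hk : k ≠ 0) :
    GBSGraph (Option V) (E ⊕ Bool) where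
  bar := Sum.elim (fun e => Sum.inl (G.bar e)) fun b => Sum.inr (!b)
  bar_ne := by
    rintro (e | b)
    · simpa using G.bar_ne e
    · cases b <;> simp
  bar_invol := by
    rintro (e | b)
    · simp [G.bar_invol e]
    · cases b <;> simp
  ini := Sum.elim (fun e => some (G.ini e)) fun b => if b then none else some v
  label := Sum.elim (fun e => G.label e) fun b => if b then k else 1
  label_ne := by
    rintro (e | b)
    · simpa using G.label_ne e
    · cases b <;> simp [hk]

/-- Elementary contraction: remove a vertex `v₀` carrying a unique edge `e₀` with
`ι(e₀) = v₀`, `τ(e₀) ≠ v₀` and `ψ(ē₀) = 1` (this is the inverse of an elementary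
expansion). -/
def contract (G : GBSGraph V E) (v₀ : V) (e₀ : E)
    (h2 : ∀ e, G.ini e = v₀ → e = e₀) :
    GBSGraph {v : V // v ≠ v₀} {e : E // e ≠ e₀ ∧ e ≠ G.bar e₀} where
  bar := fun f => ⟨G.bar f.1, by
    refine ⟨fun h => f.2.2 ((G.bar_invol f.1).symm.trans (congrArg G.bar h)),
      fun h => f.2.1 ?_⟩
    have h' := congrArg G.bar h
    rwa [G.bar_invol, G.bar_invol] at h'⟩
  bar_ne := fun f h => G.bar_ne f.1 (congrArg Subtype.val h)
  bar_invol := fun f => Subtype.ext (G.bar_invol f.1)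
  ini := fun f => ⟨G.ini f.1, fun h => f.2.1 (h2 f.1 h)⟩
  label := fun f => G.label f.1
  label_ne := fun f => G.label_ne f.1

end GBSGraph

instance optionFinite {V : Type} [Finite V] : Finite (Option V) :=
  Finite.of_equiv (V ⊕ PUnit.{1}) (Equiv.optionEquivSumPUnit V).symm

/-- A GBS graph bundled with its (finite) vertex and edge types. -/
structure BGBS : Type 1 where
  V : Type
  E : Type
  finV : Finite V
  finE : Finite E
  gr : GBSGraph V E

/-- One step for Lemma 4.1: an elementary expansion, an elementary contraction,
or a slide. -/
inductive Step18 : BGBS → BGBS → Prop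
  | slide {V E : Type} [Finite V] [Finite E] (G G' : GBSGraph V E)
      (h : GBSGraph.SlideMove G G') :
      Step18 ⟨V, E, inferInstance, inferInstance, G⟩
        ⟨V, E, inferInstance, inferInstance, G'⟩
  | expand {V E : Type} [Finite V] [Finite E] (G : GBSGraph V E) (v : V)
      (k : ℤ) (hk : k ≠ 0) :
      Step18 ⟨V, E, inferInstance, inferInstance, G⟩
        ⟨Option V, E ⊕ Bool, inferInstance, inferInstance, G.expand v k hk⟩
  | contract {V E : Type} [Finite V] [Finite E] (G : GBSGraph V E) (v₀ : V) (e₀ : E)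
      (h1 : G.ini e₀ = v₀) (h2 : ∀ e, G.ini e = v₀ → e = e₀)
      (h3 : G.ter e₀ ≠ v₀) (h4 : G.label (G.bar e₀) = 1) :
      Step18 ⟨V, E, inferInstance, inferInstance, G⟩
        ⟨{v : V // v ≠ v₀}, {e : E // e ≠ e₀ ∧ e ≠ G.bar e₀},
          inferInstance, inferInstance, G.contract v₀ e₀ h2⟩


/-!
For a loop `e` at `v` labelled `(1, n)` with `n = ℓ c`, the induction move by `ℓ` is realised
with one extra vertex: expand a new vertex `v₀` with an edge `e₀` from `v₀` to `v` labelled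
`(1, c)`; slide every other edge `d` ending at `v` once around `e` (its label becomes `ψ(d) ℓ c`)
and then across `e₀` to `v₀` (its label becomes `ψ(d) ℓ`); slide `e` across `e₀` and then `e₀`
around `e`, so that `e₀` becomes a loop at `v₀` labelled `(1, c ℓ) = (1, n)`. Now `e` is the only
edge at `v`, which is contracted, and `v₀` takes the place of `v`. In general `ℓ ∣ n ^ k` factors
as `ℓ₁ ℓ₂` with `ℓ₁ ∣ n` and `ℓ₂ ∣ n ^ (k - 1)`, and induction moves along the same loop compose
multiplicatively, so one iterates.
-/

def Equiv.optionSubtypeNeSome {V : Type} [DecidableEq V] (v : V) :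
    {x : Option V // x ≠ some v} ≃ V where
  toFun x := x.1.getD v
  invFun w := if h : w = v then ⟨none, by simp⟩ else ⟨some w, by simpa using h⟩
  left_inv := by
    rintro ⟨_ | w, hw⟩
    · simp
    · have h : w ≠ v := fun h => hw (h ▸ rfl)
      simp [h]
  right_inv w := by
    by_cases h : w = v <;> simp [h]

def Equiv.sumBoolSubtypeNe {E : Type} [DecidableEq E] {a b : E} (hab : a ≠ b) :
    {g : E ⊕ Bool // g ≠ .inl a ∧ g ≠ .inl b} ≃ E where
  toFun g := Sum.elim id (fun t => if t then a else b) g.1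
  invFun d :=
    if ha : d = a then ⟨.inr true, by simp⟩
    else if hb : d = b then ⟨.inr false, by simp⟩
    else ⟨.inl d, by simp [ha, hb]⟩
  left_inv := by
    rintro ⟨d | _ | _, hd⟩
    · have ha : d ≠ a := fun h => hd.1 (h ▸ rfl)
      have hb : d ≠ b := fun h => hd.2 (h ▸ rfl)
      simp [ha, hb]
    all_goals simp [hab.symm]
  right_inv d := by
    by_cases ha : d = a <;> by_cases hb : d = b <;> simp_all

def BGBS.BoundedStep (N : ℕ) (X Y : BGBS) : Prop :=
  Step18 X Y ∧ Nat.card Y.V ≤ N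

namespace GBSGraph

open Classical Relation

variable {V E V' E' V'' E'' : Type}

def toBGBS [Finite V] [Finite E] (G : GBSGraph V E) : BGBS :=
  ⟨V, E, inferInstance, inferInstance, G⟩

@[ext]
theorem ext {G H : GBSGraph V E} (hbar : G.bar = H.bar) (hini : G.ini = H.ini)
    (hlabel : G.label = H.label) : G = H := by
  cases G; cases H; cases hbar; cases hini; cases hlabel; rfl

@[simp]
theorem bar_bar (G : GBSGraph V E) (e : E) : G.bar (G.bar e) = e :=
  G.bar_invol e

theorem bar_eq_iff (G : GBSGraph V E) {d f : E} : G.bar f = d ↔ f = G.bar d := by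
  constructor <;> rintro rfl <;> simp

@[simp]
theorem ter_bar (G : GBSGraph V E) (e : E) : G.ter (G.bar e) = G.ini e := by
  simp [ter]

section Induct

variable (G : GBSGraph V E) (e : E)

def otherEdgesInto : Set E :=
  {d | d ≠ e ∧ d ≠ G.bar e ∧ G.ter d = G.ter e}

@[simp]
theorem mem_otherEdgesInto {d : E} :
    d ∈ G.otherEdgesInto e ↔ d ≠ e ∧ d ≠ G.bar e ∧ G.ter d = G.ter e :=
  Iff.rfl

noncomputable def induct (ℓ : ℤ) (hℓ : ℓ ≠ 0) : GBSGraph V E where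
  bar := G.bar
  bar_ne := G.bar_ne
  bar_invol := G.bar_invol
  ini := G.ini
  label d := if d ∈ G.otherEdgesInto e then ℓ * G.label d else G.label d
  label_ne d := by
    split_ifs
    exacts [mul_ne_zero hℓ (G.label_ne d), G.label_ne d]

variable {ℓ : ℤ} (hℓ : ℓ ≠ 0)

@[simp]
theorem induct_bar : (G.induct e ℓ hℓ).bar = G.bar :=
  rfl

@[simp]
theorem otherEdgesInto_induct (e' : E) :
    (G.induct e ℓ hℓ).otherEdgesInto e' = G.otherEdgesInto e' :=
  rfl

theorem induct_label (d : E) :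
    (G.induct e ℓ hℓ).label d = if d ∈ G.otherEdgesInto e then ℓ * G.label d else G.label d :=
  rfl

@[simp]
theorem induct_label_self : (G.induct e ℓ hℓ).label e = G.label e := by
  simp [induct_label]

@[simp]
theorem induct_label_bar_self : (G.induct e ℓ hℓ).label (G.bar e) = G.label (G.bar e) := by
  simp [induct_label]

theorem induct_induct {ℓ₁ ℓ₂ : ℤ} (h₁ : ℓ₁ ≠ 0) (h₂ : ℓ₂ ≠ 0) :
    (G.induct e ℓ₁ h₁).induct e ℓ₂ h₂ = G.induct e (ℓ₁ * ℓ₂) (mul_ne_zero h₁ h₂) := by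
  ext d
  · rfl
  · rfl
  · simp only [induct_label, otherEdgesInto_induct]
    split_ifs <;> ring

end Induct

theorem InductionMove.exists_eq_induct {G G' : GBSGraph V E} (h : InductionMove G G') :
    ∃ (e : E) (ℓ : ℤ) (k : ℕ) (hℓ : ℓ ≠ 0), G.ini e = G.ter e ∧ G.label (G.bar e) = 1 ∧
      ℓ ∣ G.label e ^ k ∧ G' = G.induct e ℓ hℓ := by
  obtain ⟨e, ℓ, k, hloop, h₁, hℓ, hdvd, hbar, hini, hmul, hkeep⟩ := h
  refine ⟨e, ℓ, k, hℓ, hloop, h₁, hdvd, ext hbar hini (funext fun d => ?_)⟩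
  rw [induct_label]
  split_ifs with hd
  · exact hmul d hd.1 hd.2.1 hd.2.2
  · exact hkeep d (by simp only [mem_otherEdgesInto] at hd; tauto)

structure LabelledEquiv (G : GBSGraph V E) (H : GBSGraph V' E') where
  vert : V ≃ V'
  edge : E ≃ E'
  map_bar : ∀ e, edge (G.bar e) = H.bar (edge e)
  map_ini : ∀ e, vert (G.ini e) = H.ini (edge e)
  map_label : ∀ e, G.label e = H.label (edge e)

namespace LabelledEquiv

variable {G : GBSGraph V E} {H : GBSGraph V' E'} {K : GBSGraph V'' E''}

def trans (φ : G.LabelledEquiv H) (ψ : H.LabelledEquiv K) : G.LabelledEquiv K where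
  vert := φ.vert.trans ψ.vert
  edge := φ.edge.trans ψ.edge
  map_bar e := by simp [φ.map_bar, ψ.map_bar]
  map_ini e := by simp [φ.map_ini, ψ.map_ini]
  map_label e := by simp [φ.map_label, ψ.map_label]

theorem map_ter (φ : G.LabelledEquiv H) (e : E) : φ.vert (G.ter e) = H.ter (φ.edge e) := by
  rw [ter, ter, φ.map_ini, φ.map_bar]

theorem labelledIso (φ : G.LabelledEquiv H) : G.LabelledIso H :=
  ⟨φ.vert, φ.edge, φ.map_bar, φ.map_ini, φ.map_label⟩

noncomputable def induct (φ : G.LabelledEquiv H) {e : E} {e' : E'} (he : φ.edge e = e') {ℓ : ℤ}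
    (hℓ : ℓ ≠ 0) : (G.induct e ℓ hℓ).LabelledEquiv (H.induct e' ℓ hℓ) where
  vert := φ.vert
  edge := φ.edge
  map_bar := φ.map_bar
  map_ini := φ.map_ini
  map_label d := by
    have hmem : d ∈ G.otherEdgesInto e ↔ φ.edge d ∈ H.otherEdgesInto e' := by
      simp only [mem_otherEdgesInto, ← he, ← φ.map_bar, ← φ.map_ter, φ.edge.injective.ne_iff,
        φ.vert.injective.eq_iff]
    simp only [induct_label, hmem, φ.map_label d]

end LabelledEquiv

/-- `G.redirectAll S u m` moves the terminal end of every edge `d ∈ S` to `u`, where `d` gets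
the label `m d`. -/
noncomputable def redirectAll (G : GBSGraph V E) (S : Set E) (u : V) (m : E → ℤ)
    (hm : ∀ d, m d ≠ 0) : GBSGraph V E where
  bar := G.bar
  bar_ne := G.bar_ne
  bar_invol := G.bar_invol
  ini x := if G.bar x ∈ S then u else G.ini x
  label d := if d ∈ S then m d else G.label d
  label_ne d := by
    split_ifs
    exacts [hm d, G.label_ne d]

noncomputable def redirect (G : GBSGraph V E) (d : E) (u : V) (m : ℤ) (hm : m ≠ 0) :
    GBSGraph V E :=
  G.redirectAll {d} u (fun _ => m) fun _ => hm

section Redirect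

variable (G : GBSGraph V E) (S : Set E) (u : V) (m : E → ℤ) (hm : ∀ d, m d ≠ 0)

@[simp]
theorem redirectAll_bar : (G.redirectAll S u m hm).bar = G.bar :=
  rfl

@[simp]
theorem redirectAll_ini (x : E) :
    (G.redirectAll S u m hm).ini x = if G.bar x ∈ S then u else G.ini x :=
  rfl

@[simp]
theorem redirectAll_label (d : E) :
    (G.redirectAll S u m hm).label d = if d ∈ S then m d else G.label d :=
  rfl

theorem redirectAll_empty : G.redirectAll ∅ u m hm = G := by
  ext <;> simp

theorem redirect_redirectAll (d : E) :
    (G.redirectAll S u m hm).redirect d u (m d) (hm d) = G.redirectAll (insert d S) u m hm := by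
  ext x
  · rfl
  · by_cases hx : G.bar x = d <;> simp [redirect, hx]
  · by_cases hx : x = d <;> simp [redirect, hx]

theorem redirect_redirect (d : E) (u' : V) {m₁ m₂ : ℤ} (hm₁ : m₁ ≠ 0) (hm₂ : m₂ ≠ 0) :
    (G.redirect d u m₁ hm₁).redirect d u' m₂ hm₂ = G.redirect d u' m₂ hm₂ := by
  ext x
  · rfl
  · by_cases hx : G.bar x = d <;> simp [redirect, hx]
  · by_cases hx : x = d <;> simp [redirect, hx]

end Redirect

theorem slideMove_redirect (G : GBSGraph V E) {d e : E} {ℓ m : ℤ} {u : V}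
    (hde : d ≠ e) (hdbe : d ≠ G.bar e) (hter : G.ter d = G.ini e)
    (hd : G.label d = ℓ * G.label (G.bar e)) (hu : u = G.ter e) (hm : m = ℓ * G.label e)
    (hm0 : m ≠ 0) :
    SlideMove G (G.redirect d u m hm0) := by
  have hℓ : ℓ ≠ 0 := left_ne_zero_of_mul (hd ▸ G.label_ne d)
  refine ⟨d, e, ℓ, hde, hdbe, hter, hℓ, hd, rfl, fun f hf => ?_, ?_, fun f hf => ?_, ?_⟩ <;>
    simp_all [redirect, bar_eq_iff]

section LoopSlides

variable (H : GBSGraph V E) {e f : E} {ℓ c : ℤ} (hℓ : ℓ ≠ 0)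
  (hini : H.ini e = H.ini f) (hter : H.ter e = H.ini f) (he₁ : H.label (H.bar e) = 1)
  (he : H.label e = ℓ * c) (hf₁ : H.label (H.bar f) = c) (hf : H.label f = 1)
include hini hter he₁ he hf₁ hf

/-- Sliding `d` once around the loop `e`, labelled `(1, ℓ * c)`, and then across the edge `f`,
labelled `(c, 1)`, moves the end of `d` to `τ(f)` and multiplies its label by `ℓ`. -/
theorem slideMove_slideMove_redirectAll_insert
    {S : Set E} (hS : ∀ d ∈ S, d ≠ e ∧ d ≠ H.bar e ∧ d ≠ f ∧ d ≠ H.bar f)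
    {d : E} (hdS : d ∉ S) (hd : H.ter d = H.ini f ∧ d ≠ e ∧ d ≠ H.bar e ∧ d ≠ f ∧ d ≠ H.bar f) :
    ∃ H', SlideMove (H.redirectAll S (H.ter f) (fun d => ℓ * H.label d)
        fun d => mul_ne_zero hℓ (H.label_ne d)) H' ∧
      SlideMove H' (H.redirectAll (insert d S) (H.ter f) (fun d => ℓ * H.label d)
        fun d => mul_ne_zero hℓ (H.label_ne d)) := by
  set HS := H.redirectAll S (H.ter f) (fun d => ℓ * H.label d)
    fun d => mul_ne_zero hℓ (H.label_ne d)
  obtain ⟨hdter, hde, hdbe, hdf, hdbf⟩ := hd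
  have he_S : e ∉ S := fun h => (hS e h).1 rfl
  have hbe_S : H.bar e ∉ S := fun h => (hS _ h).2.1 rfl
  have hf_S : f ∉ S := fun h => (hS f h).2.2.1 rfl
  have hbf_S : H.bar f ∉ S := fun h => (hS _ h).2.2.2 rfl
  have hm : H.label d * (ℓ * c) ≠ 0 := he ▸ mul_ne_zero (H.label_ne d) (H.label_ne e)
  refine ⟨HS.redirect d (H.ini f) (H.label d * (ℓ * c)) hm, ?_, ?_⟩
  · refine HS.slideMove_redirect (ℓ := H.label d) hde hdbe ?_ ?_ ?_ ?_ hm <;>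
      simp_all [HS, ter]
  · rw [← redirect_redirectAll, ← redirect_redirect HS (H.ini f) d (H.ter f) hm]
    refine (HS.redirect d _ _ hm).slideMove_redirect (ℓ := ℓ * H.label d) hdf hdbf ?_ ?_ ?_ ?_ _
    · simp_all [HS, redirect, ter]
    · simp [HS, redirect, hdbf.symm, hbf_S, hf₁]
      ring
    · simp [HS, redirect, ter, hdf.symm, hf_S]
    · simp [HS, redirect, hdf.symm, hf_S, hf]

theorem slides_redirectAll [Finite E] (S : Set E)
    (hS : ∀ d ∈ S, H.ter d = H.ini f ∧ d ≠ e ∧ d ≠ H.bar e ∧ d ≠ f ∧ d ≠ H.bar f) :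
    ReflTransGen SlideMove H (H.redirectAll S (H.ter f) (fun d => ℓ * H.label d)
      fun d => mul_ne_zero hℓ (H.label_ne d)) := by
  induction S, S.toFinite using Set.Finite.induction_on with
  | empty => rw [redirectAll_empty]
  | @insert d S hdS _ ih =>
    have hS' : ∀ x ∈ S, _ := fun x hx => hS x (Set.mem_insert_of_mem d hx)
    obtain ⟨H', h₁, h₂⟩ := slideMove_slideMove_redirectAll_insert H hℓ hini hter he₁ he hf₁ hf
      (fun x hx => (hS' x hx).2) hdS (hS d (Set.mem_insert d S))
    exact ((ih hS').tail h₁).tail h₂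

end LoopSlides

section SlideOff

variable (G : GBSGraph V E) (e : E) {ℓ c : ℤ} (hℓ : ℓ ≠ 0) (hc : c ≠ 0)

/-- `G.expand (G.ter e) c` after sliding to the new vertex `none`: first every edge of
`G.otherEdgesInto e` (as in `slides_redirectAll`), then `e` across the new edge, and then the new
edge around `e`. -/
noncomputable def slideOff : GBSGraph (Option V) (E ⊕ Bool) :=
  let X := G.expand (G.ter e) c hc
  ((X.redirectAll (Sum.inl '' G.otherEdgesInto e) none
      (fun d => ℓ * X.label d) fun d => mul_ne_zero hℓ (X.label_ne d)).redirect
    (.inl e) none ℓ hℓ).redirect (.inr true) none (c * ℓ) (mul_ne_zero hc hℓ)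

theorem slides_expand_slideOff [Finite E] (hloop : G.ini e = G.ter e)
    (h₁ : G.label (G.bar e) = 1) (hn : G.label e = ℓ * c) :
    ReflTransGen SlideMove (G.expand (G.ter e) c hc) (G.slideOff e hℓ hc) := by
  set X := G.expand (G.ter e) c hc
  have hslides := X.slides_redirectAll hℓ (e := .inl e) (f := .inr false) (c := c)
    (by simp [X, expand, hloop]) (by simp [X, expand, ter]) (by simpa [X, expand] using h₁)
    (by simpa [X, expand] using hn) (by simp [X, expand]) (by simp [X, expand])
    (Sum.inl '' G.otherEdgesInto e)
    (by rintro _ ⟨d, ⟨hde, hdbe, hd⟩, rfl⟩; simpa [X, expand, ter, hde, hdbe] using hd)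
  rw [show X.ter (.inr false) = none from rfl] at hslides
  set H₁ := X.redirectAll (Sum.inl '' G.otherEdgesInto e) none
    (fun d => ℓ * X.label d) fun d => mul_ne_zero hℓ (X.label_ne d)
  have h₁₂ : SlideMove H₁ (H₁.redirect (.inl e) none ℓ hℓ) := by
    refine H₁.slideMove_redirect (e := .inr false) (ℓ := ℓ) ?_ ?_ ?_ ?_ ?_ ?_ hℓ <;>
      simp [H₁, X, expand, ter, hn]
  have h₂₃ : SlideMove (H₁.redirect (.inl e) none ℓ hℓ) (G.slideOff e hℓ hc) := by
    refine (H₁.redirect (.inl e) none ℓ hℓ).slideMove_redirect (e := .inl e) (ℓ := c)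
      ?_ ?_ ?_ ?_ ?_ ?_ _ <;>
      simp [H₁, X, redirect, expand, ter, hloop, h₁, G.bar_ne]
  exact (hslides.tail h₁₂).tail h₂₃

@[simp]
theorem slideOff_bar :
    (G.slideOff e hℓ hc).bar = Sum.elim (fun d => .inl (G.bar d)) fun b => .inr !b :=
  rfl

theorem slideOff_ini_inl (d : E) :
    (G.slideOff e hℓ hc).ini (.inl d) =
      if d = G.bar e ∨ G.bar d ∈ G.otherEdgesInto e then none else some (G.ini d) := by
  by_cases h : d = G.bar e <;> simp [slideOff, redirect, expand, h, bar_eq_iff]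

@[simp]
theorem slideOff_ini_inr (b : Bool) : (G.slideOff e hℓ hc).ini (.inr b) = none := by
  cases b <;> simp [slideOff, redirect, expand]

theorem slideOff_label_inl (d : E) :
    (G.slideOff e hℓ hc).label (.inl d) =
      if d = e then ℓ else if d ∈ G.otherEdgesInto e then ℓ * G.label d else G.label d := by
  by_cases h : d = e <;> simp [slideOff, redirect, expand, h]

@[simp]
theorem slideOff_label_inr (b : Bool) :
    (G.slideOff e hℓ hc).label (.inr b) = if b then c * ℓ else 1 := by
  cases b <;> simp [slideOff, redirect, expand]

theorem eq_inl_of_slideOff_ini_eq :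
    ∀ g, (G.slideOff e hℓ hc).ini g = some (G.ter e) → g = .inl e := by
  rintro (d | b) hg
  · rw [slideOff_ini_inl] at hg
    split_ifs at hg with hd
    refine congrArg Sum.inl (by_contra fun hde => hd (Or.inr ?_))
    simp_all [bar_eq_iff]
  · simp at hg

theorem slideOff_ini_inl_self (hloop : G.ini e = G.ter e) :
    (G.slideOff e hℓ hc).ini (.inl e) = some (G.ter e) := by
  simp [slideOff_ini_inl, hloop, (G.bar_ne e).symm]

theorem slideOff_ter_inl_self : (G.slideOff e hℓ hc).ter (.inl e) = none := by
  simp [ter, slideOff_ini_inl]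

theorem slideOff_label_bar_inl_self :
    (G.slideOff e hℓ hc).label ((G.slideOff e hℓ hc).bar (.inl e)) = G.label (G.bar e) := by
  simp [slideOff_label_inl, G.bar_ne]

/- `slideOff` is built from classical `if`s, so its endpoints and labels do not reduce by `rfl`:
the `change`s below expose them to the `slideOff_*` lemmas. -/
noncomputable def contractSlideOffEquiv (hloop : G.ini e = G.ter e)
    (h₁ : G.label (G.bar e) = 1) (hn : G.label e = ℓ * c) :
    LabelledEquiv ((G.slideOff e hℓ hc).contract (some (G.ter e)) (.inl e)
      (G.eq_inl_of_slideOff_ini_eq e hℓ hc)) (G.induct e ℓ hℓ) where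
  vert := Equiv.optionSubtypeNeSome (G.ter e)
  edge := Equiv.sumBoolSubtypeNe (G.bar_ne e).symm
  map_bar := by
    rintro ⟨d | _ | _, hd⟩
    exacts [rfl, (G.bar_invol e).symm, rfl]
  map_ini := by
    rintro ⟨d | _ | _, hd⟩
    · change ((G.slideOff e hℓ hc).ini (.inl d)).getD (G.ter e) = G.ini d
      rw [slideOff_ini_inl]
      split_ifs with h
      · rcases h with rfl | h
        · rfl
        · simpa using h.2.2.symm
      · rfl
    · change ((G.slideOff e hℓ hc).ini (.inr false)).getD (G.ter e) = G.ini (G.bar e)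
      rw [slideOff_ini_inr]
      rfl
    · change ((G.slideOff e hℓ hc).ini (.inr true)).getD (G.ter e) = G.ini e
      rw [slideOff_ini_inr]
      exact hloop.symm
  map_label := by
    rintro ⟨d | _ | _, hd⟩
    · change (G.slideOff e hℓ hc).label (.inl d) = (G.induct e ℓ hℓ).label d
      have hde : d ≠ e := fun h => hd.1 (h ▸ rfl)
      rw [slideOff_label_inl, induct_label, if_neg hde]
    · change (G.slideOff e hℓ hc).label (.inr false) = (G.induct e ℓ hℓ).label (G.bar e)
      simp [h₁]
    · change (G.slideOff e hℓ hc).label (.inr true) = (G.induct e ℓ hℓ).label e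
      simp [hn, mul_comm]

end SlideOff

theorem boundedSteps_of_slides [Finite V] [Finite E] {N : ℕ} (hN : Nat.card V ≤ N)
    {G G' : GBSGraph V E} (h : ReflTransGen SlideMove G G') :
    ReflTransGen (BGBS.BoundedStep N) G.toBGBS G'.toBGBS :=
  h.lift toBGBS fun _ _ hs => ⟨Step18.slide _ _ hs, hN⟩

theorem exists_boundedSteps_induct_of_dvd [Finite V] [Finite E] (G : GBSGraph V E) {e : E}
    (hloop : G.ini e = G.ter e) (h₁ : G.label (G.bar e) = 1) {ℓ : ℤ} (hℓ : ℓ ≠ 0)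
    (hdvd : ℓ ∣ G.label e) :
    ∃ Y : BGBS, ReflTransGen (BGBS.BoundedStep (Nat.card V + 1)) G.toBGBS Y ∧
      Nonempty (Y.gr.LabelledEquiv (G.induct e ℓ hℓ)) := by
  obtain ⟨c, hn⟩ := hdvd
  have hc : c ≠ 0 := right_ne_zero_of_mul (hn ▸ G.label_ne e)
  have hcard : Nat.card (Option V) = Nat.card V + 1 := Finite.card_option
  set Z := G.slideOff e hℓ hc
  set Y := Z.contract (some (G.ter e)) (.inl e) (G.eq_inl_of_slideOff_ini_eq e hℓ hc)
  have hexpand : BGBS.BoundedStep (Nat.card V + 1) G.toBGBS (G.expand (G.ter e) c hc).toBGBS :=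
    ⟨Step18.expand G _ c hc, hcard.le⟩
  have hslides := boundedSteps_of_slides hcard.le (G.slides_expand_slideOff e hℓ hc hloop h₁ hn)
  have hcontract : BGBS.BoundedStep (Nat.card V + 1) Z.toBGBS Y.toBGBS := by
    refine ⟨Step18.contract Z _ _ (G.slideOff_ini_inl_self e hℓ hc hloop)
      (G.eq_inl_of_slideOff_ini_eq e hℓ hc) (by simp [Z, slideOff_ter_inl_self])
      (by rw [slideOff_label_bar_inl_self, h₁]), ?_⟩
    exact (Nat.card_congr (Equiv.optionSubtypeNeSome (G.ter e))).trans_le (Nat.le_succ _)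
  exact ⟨Y.toBGBS, (ReflTransGen.head hexpand hslides).tail hcontract,
    ⟨G.contractSlideOffEquiv e hℓ hc hloop h₁ hn⟩⟩

theorem exists_boundedSteps_induct (k : ℕ) [Finite V] [Finite E] (G : GBSGraph V E) {e : E}
    (hloop : G.ini e = G.ter e) (h₁ : G.label (G.bar e) = 1) {ℓ : ℤ} (hℓ : ℓ ≠ 0)
    (hdvd : ℓ ∣ G.label e ^ k) :
    ∃ Y : BGBS, ReflTransGen (BGBS.BoundedStep (Nat.card V + 1)) G.toBGBS Y ∧
      Nonempty (Y.gr.LabelledEquiv (G.induct e ℓ hℓ)) := by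
  induction k generalizing V E ℓ with
  | zero =>
    exact G.exists_boundedSteps_induct_of_dvd hloop h₁ hℓ
      (isUnit_of_dvd_one (by simpa using hdvd)).dvd
  | succ k ih =>
    obtain ⟨ℓ₁, ℓ₂, hd₁, hd₂, rfl⟩ :=
      exists_dvd_and_dvd_of_dvd_mul (pow_succ' (G.label e) k ▸ hdvd)
    obtain ⟨hℓ₁, hℓ₂⟩ := mul_ne_zero_iff.mp hℓ
    obtain ⟨Y₁, hsteps₁, ⟨φ⟩⟩ := G.exists_boundedSteps_induct_of_dvd hloop h₁ hℓ₁ hd₁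
    have := Y₁.finV
    have := Y₁.finE
    set e₁ := φ.edge.symm e
    have he₁ : φ.edge e₁ = e := φ.edge.apply_symm_apply e
    have hloop₁ : Y₁.gr.ini e₁ = Y₁.gr.ter e₁ :=
      φ.vert.injective (by rw [φ.map_ini, φ.map_ter, he₁]; exact hloop)
    have h₁' : Y₁.gr.label (Y₁.gr.bar e₁) = 1 := by
      rw [φ.map_label, φ.map_bar, he₁]
      simpa using h₁
    have hd₂' : ℓ₂ ∣ Y₁.gr.label e₁ ^ k := by
      rw [φ.map_label, he₁]
      simpa using hd₂
    obtain ⟨Y₂, hsteps₂, ⟨ψ⟩⟩ := ih Y₁.gr hloop₁ h₁' hℓ₂ hd₂'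
    rw [Nat.card_congr φ.vert] at hsteps₂
    refine ⟨Y₂, hsteps₁.trans hsteps₂, ⟨ψ.trans ?_⟩⟩
    rw [← induct_induct]
    exact φ.induct he₁ hℓ₂

end GBSGraph

/-- Lemma 4.1 (induction is a derived move): any induction move can be realized
by a sequence of elementary expansions, elementary contractions and slides, in
which every graph occurring in the sequence has at most `|V(Γ)| + 1` vertices. -/
theorem stmt_18 {V E : Type} [Finite V] [Finite E] (G G' : GBSGraph V E)
    (h : GBSGraph.InductionMove G G') :
    ∃ Y : BGBS,
      Relation.ReflTransGen
        (fun X Y => Step18 X Y ∧ Nat.card Y.V ≤ Nat.card V + 1)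
        ⟨V, E, inferInstance, inferInstance, G⟩ Y ∧
      Y.gr.LabelledIso G' := by
  obtain ⟨e, ℓ, k, hℓ, hloop, h₁, hdvd, rfl⟩ := h.exists_eq_induct
  obtain ⟨Y, hsteps, ⟨φ⟩⟩ := GBSGraph.exists_boundedSteps_induct k G hloop h₁ hℓ hdvd
  exact ⟨Y, hsteps, φ.labelledIso⟩
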